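/- arXiv:1011.0351 — 4 statements merged into one kernel-verified Lean document; each statement's English description precedes it below -/
import Mathlib

section
/- For every integer α ≥ 2 and t ≥ 2, the quantity α / log(α^(t-1)/(α^(t-1)-1)) is strictly less than 1 / log(α^t/(α^t-1)). (Here log denotes the natural or base-2 logarithm; the statement is independent of the base.) -/
/-!
Put `A = α ^ (t - 1)` and `B = α ^ t = α * A`, so that `A / (A - 1) = B / (B - α)`. After clearing
the (positive) logarithms the claim reads `α * log (B / (B - 1)) < log (B / (B - α))`, and after
exponentiating this is the strict Bernoulli inequality `1 - α / B < (1 - 1 / B) ^ α`.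
-/

open Real

lemma log_div_sub_one_pos {x : ℝ} (hx : 1 < x) : 0 < log (x / (x - 1)) :=
  log_pos <| (one_lt_div (by linarith)).2 (by linarith)

lemma mul_log_div_sub_one_lt_log_div_sub {p x : ℝ} (hp : 1 < p) (hpx : p < x) :
    p * log (x / (x - 1)) < log (x / (x - p)) := by
  have hx : 0 < x := by linarith
  have hbernoulli : 1 + p * -x⁻¹ < (1 + -x⁻¹) ^ p :=
    one_add_mul_self_lt_rpow_one_add (neg_le_neg (inv_le_one_of_one_le₀ (by linarith)))
      (neg_ne_zero.2 (inv_ne_zero hx.ne')) hp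
  have hlhs : 1 + p * -x⁻¹ = (x - p) / x := by field_simp; ring
  have hrhs : 1 + -x⁻¹ = (x - 1) / x := by field_simp; ring
  rw [hlhs, hrhs] at hbernoulli
  have hlog := log_lt_log (div_pos (by linarith) hx) hbernoulli
  rw [log_rpow (div_pos (by linarith) hx)] at hlog
  rw [← inv_div, log_inv, ← inv_div (x - p), log_inv]
  linarith

theorem stmt_1 (α t : ℕ) (hα : 2 ≤ α) (ht : 2 ≤ t) :
    (α : ℝ) / Real.log ((α : ℝ) ^ (t - 1) / ((α : ℝ) ^ (t - 1) - 1)) <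
      1 / Real.log ((α : ℝ) ^ t / ((α : ℝ) ^ t - 1)) := by
  have hα' : (2 : ℝ) ≤ α := by exact_mod_cast hα
  set A : ℝ := (α : ℝ) ^ (t - 1)
  have hA : (α : ℝ) ≤ A := le_self_pow₀ (by linarith) (by omega)
  have hpow : (α : ℝ) ^ t = α * A := by rw [← pow_succ', Nat.sub_add_cancel (by omega)]
  have hshift : A / (A - 1) = α * A / (α * A - α) := by
    rw [← mul_sub_one, mul_div_mul_left _ _ (by positivity)]
  have hkey := mul_log_div_sub_one_lt_log_div_sub (p := α) (x := α * A) (by linarith) (by nlinarith)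
  rw [hpow, div_lt_div_iff₀ (log_div_sub_one_pos (by linarith))
    (log_div_sub_one_pos (by nlinarith)), hshift]
  linarith
end

section
/- Fix integers α ≥ 2, t ≥ 2. There is a constant C = α(t-1)/log₂(α^(t-1)/(α^(t-1)-1)) such that for all sufficiently large m, there exists an m × n matrix over an alphabet of size α that is a t-α covering array with n ≤ C·log₂(m)·(1 + o(1)); equivalently, N(m,t,α) ≤ α(t-1)log₂(m)/log₂(α^(t-1)/(α^(t-1)-1)) · (1+o(1)) as m → ∞. -/
/-!
Take `n` vectors `B q ∈ Gᵐ⁰` over a finite abelian group `G` of order `α` and use all `n α`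
translates `B q + g` as columns. For `t` distinct rows `p` and a target `v`, the translates of a
uniformly random vector hit `v` on `p` with probability `α¹⁻ᵗ`, so a pattern `(p, v)` is missed
by all of them with probability `(1 - α¹⁻ᵗ)ⁿ`. Averaging over `B` with `m₀ = 2m` rows gives a
choice missing at most `m` patterns; deleting one row of each missed pattern leaves `m` rows on
which the array covers. This needs only `(2mα)ᵗ (1 - α¹⁻ᵗ)ⁿ ≤ m`, so the deletion trades the
factor `mᵗ` of the plain union bound for `mᵗ⁻¹`, whence `n ≈ (t - 1) log m / log (β / (β - 1))`
with `β = αᵗ⁻¹`.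
-/

open Filter

/-- `M` is a `t`-`α` covering array: for every choice of `t` distinct rows and every
vector `v`, some column realizes `v` on those rows. -/
def IsCoveringArray (m n α t : ℕ) (M : Fin m → Fin n → Fin α) : Prop :=
  ∀ p : Fin t → Fin m, Function.Injective p →
    ∀ v : Fin t → Fin α, ∃ q : Fin n, ∀ i : Fin t, M (p i) q = v i

open Function Real

section ShiftCovering

variable {ι G : Type*} [Fintype ι] [AddCommGroup G] [Fintype G] {t : ℕ}

def CoversUpToShift (c : ι → G) (p : Fin t → ι) (v : Fin t → G) : Prop :=
  ∃ g, ∀ i, c (p i) + g = v i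

theorem card_pow_mul_le_card_coversUpToShift (ht : 0 < t) {p : Fin t → ι} (hp : Injective p)
    (v : Fin t → G) :
    Fintype.card G ^ (Fintype.card ι - t) * Fintype.card G ≤
      Nat.card {c : ι → G // CoversUpToShift c p v} := by
  classical
  let F : ((↥(Set.range p)ᶜ → G) × G) → {c : ι → G // CoversUpToShift c p v} := fun rg =>
    ⟨extend p (fun i => v i - rg.2) (fun x => if hx : x ∈ Set.range p then 0 else rg.1 ⟨x, hx⟩),
      rg.2, fun i => by simp [hp.extend_apply]⟩
  have hF : Injective F := by
    rintro ⟨r, g⟩ ⟨r', g'⟩ h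
    have h := congrArg Subtype.val h
    refine Prod.ext (funext fun x => ?_) ?_
    · have hx : ¬∃ i, p i = x := fun ⟨i, hi⟩ => x.2 ⟨i, hi⟩
      simpa [F, extend_apply' _ _ _ hx, hx] using congrFun h x
    · simpa [F, hp.extend_apply] using congrFun h (p ⟨0, ht⟩)
  calc _ = Nat.card ((↥(Set.range p)ᶜ → G) × G) := by
        rw [Nat.card_prod, Nat.card_fun, Nat.card_eq_fintype_card (α := ↥(Set.range p)ᶜ),
          Fintype.card_compl_set, Set.card_range_of_injective hp, Fintype.card_fin,
          Nat.card_eq_fintype_card]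
    _ ≤ _ := Nat.card_le_card_of_injective F hF

theorem card_not_coversUpToShift_le (ht : 0 < t) {p : Fin t → ι} (hp : Injective p)
    (v : Fin t → G) :
    Nat.card {c : ι → G // ¬CoversUpToShift c p v} ≤
      Fintype.card G ^ (Fintype.card ι - t) * (Fintype.card G ^ t - Fintype.card G) := by
  classical
  have hsplit : Fintype.card G ^ Fintype.card ι =
      Fintype.card G ^ (Fintype.card ι - t) * Fintype.card G ^ t := by
    rw [← pow_add, Nat.sub_add_cancel (by simpa using Fintype.card_le_of_injective p hp)]
  have hcovers := card_pow_mul_le_card_coversUpToShift ht hp v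
  rw [Nat.card_eq_fintype_card] at hcovers ⊢
  rw [Fintype.card_subtype_compl, Fintype.card_fun, hsplit, Nat.mul_sub]
  exact Nat.sub_le_sub_left hcovers _

theorem card_forall_not_coversUpToShift_le (ht : 0 < t) {p : Fin t → ι} (hp : Injective p)
    (v : Fin t → G) (n : ℕ) :
    Nat.card {B : Fin n → ι → G // ∀ q, ¬CoversUpToShift (B q) p v} ≤
      (Fintype.card G ^ (Fintype.card ι - t) * (Fintype.card G ^ t - Fintype.card G)) ^ n := by
  rw [Nat.card_congr (Equiv.subtypePiEquivPi (β := fun _ : Fin n => ι → G)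
    (p := fun _ c => ¬CoversUpToShift c p v)), Nat.card_fun, Nat.card_eq_fintype_card (α := Fin n),
    Fintype.card_fin]
  exact Nat.pow_le_pow_left (card_not_coversUpToShift_le ht hp v) n

def IsUncovered {n : ℕ} (B : Fin n → ι → G) (x : (Fin t → ι) × (Fin t → G)) : Prop :=
  Injective x.1 ∧ ∀ q, ¬CoversUpToShift (B q) x.1 x.2

theorem exists_card_isUncovered_le (ht : 0 < t) (htι : t ≤ Fintype.card ι) {n k : ℕ}
    (hcount : Fintype.card ι ^ t * Fintype.card G ^ t * (Fintype.card G ^ t - Fintype.card G) ^ n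
      ≤ k * (Fintype.card G ^ t) ^ n) :
    ∃ B : Fin n → ι → G, Nat.card {x // IsUncovered (t := t) B x} ≤ k := by
  classical
  set a := Fintype.card G
  have hsplit : a ^ Fintype.card ι = a ^ (Fintype.card ι - t) * a ^ t := by
    rw [← pow_add, Nat.sub_add_cancel htι]
  have hfiber (x : (Fin t → ι) × (Fin t → G)) :
      (Finset.univ.filter fun B : Fin n → ι → G => IsUncovered B x).card ≤
        (a ^ (Fintype.card ι - t) * (a ^ t - a)) ^ n := by
    by_cases hx : Injective x.1
    · have := card_forall_not_coversUpToShift_le ht hx x.2 n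
      simpa [IsUncovered, hx, Nat.card_eq_fintype_card, Fintype.card_subtype] using this
    · simp [IsUncovered, hx]
  have hsum : ∑ B : Fin n → ι → G, (Finset.univ.filter (IsUncovered (t := t) B)).card ≤
      ∑ _B : Fin n → ι → G, k := by
    calc ∑ B : Fin n → ι → G, (Finset.univ.filter (IsUncovered (t := t) B)).card
        = ∑ x : (Fin t → ι) × (Fin t → G),
            (Finset.univ.filter fun B : Fin n → ι → G => IsUncovered B x).card := by
          simp only [Finset.card_filter]; exact Finset.sum_comm
      _ ≤ ∑ _x : (Fin t → ι) × (Fin t → G), (a ^ (Fintype.card ι - t) * (a ^ t - a)) ^ n :=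
          Finset.sum_le_sum fun x _ => hfiber x
      _ ≤ ∑ _B : Fin n → ι → G, k := by
          simp only [Finset.sum_const, Finset.card_univ, smul_eq_mul, Fintype.card_prod,
            Fintype.card_fun, Fintype.card_fin]
          calc Fintype.card ι ^ t * a ^ t * (a ^ (Fintype.card ι - t) * (a ^ t - a)) ^ n
              = (a ^ (Fintype.card ι - t)) ^ n *
                  (Fintype.card ι ^ t * a ^ t * (a ^ t - a) ^ n) := by
                rw [mul_pow]; ring
            _ ≤ (a ^ (Fintype.card ι - t)) ^ n * (k * (a ^ t) ^ n) := Nat.mul_le_mul_left _ hcount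
            _ = (a ^ Fintype.card ι) ^ n * k := by rw [hsplit, mul_pow]; ring
  obtain ⟨B, -, hB⟩ := Finset.exists_le_of_sum_le Finset.univ_nonempty hsum
  exact ⟨B, by simpa [Nat.card_eq_fintype_card, Fintype.card_subtype] using hB⟩

theorem exists_embedding_coversUpToShift {n m : ℕ} (ht : 0 < t) (B : Fin n → ι → G)
    (hB : Nat.card {x // IsUncovered (t := t) B x} + m ≤ Fintype.card ι) :
    ∃ e : Fin m ↪ ι, ∀ p : Fin t → Fin m, Injective p →
      ∀ v, ∃ q, CoversUpToShift (B q) (e ∘ p) v := by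
  classical
  let i₀ : Fin t := ⟨0, ht⟩
  let D : Finset ι := (Finset.univ.filter (IsUncovered B)).image fun x => x.1 i₀
  have hD : D.card + m ≤ Fintype.card ι := by
    refine le_trans (Nat.add_le_add_right (Finset.card_image_le.trans ?_) m) hB
    simp [Nat.card_eq_fintype_card, Fintype.card_subtype]
  obtain ⟨e⟩ : Nonempty (Fin m ↪ {x // x ∉ D}) := by
    apply Function.Embedding.nonempty_of_card_le
    rw [Fintype.card_fin, Fintype.card_subtype_compl, Fintype.card_coe]
    omega
  refine ⟨e.trans (Function.Embedding.subtype _), fun p hp v => ?_⟩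
  by_contra! hv
  have hbad : IsUncovered B (e.trans (Function.Embedding.subtype _) ∘ p, v) :=
    ⟨(Function.Embedding.injective _).comp hp, hv⟩
  exact (e (p i₀)).2 (Finset.mem_image.mpr ⟨_, by simpa using hbad, rfl⟩)

end ShiftCovering

theorem isCoveringArray_of_forall_coversUpToShift {α m n t : ℕ} [NeZero α]
    (B : Fin n → Fin m → Fin α)
    (hB : ∀ p : Fin t → Fin m, Injective p → ∀ v, ∃ q, CoversUpToShift (B q) p v) :
    IsCoveringArray m (n * α) α t
      fun i j => B (finProdFinEquiv.symm j).1 i + (finProdFinEquiv.symm j).2 := by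
  intro p hp v
  obtain ⟨q, g, hg⟩ := hB p hp v
  exact ⟨finProdFinEquiv (q, g), by simpa using hg⟩

theorem exists_isCoveringArray_of_pow_le {α m m₀ n t k : ℕ} [NeZero α] (ht : 0 < t)
    (htm₀ : t ≤ m₀) (hm₀ : k + m ≤ m₀)
    (hcount : m₀ ^ t * α ^ t * (α ^ t - α) ^ n ≤ k * (α ^ t) ^ n) :
    ∃ M : Fin m → Fin (n * α) → Fin α, IsCoveringArray m (n * α) α t M := by
  obtain ⟨B, hB⟩ := exists_card_isUncovered_le (ι := Fin m₀) (G := Fin α) ht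
    (by simpa using htm₀) (by simpa using hcount)
  obtain ⟨e, he⟩ := exists_embedding_coversUpToShift ht B
    (by simpa using (Nat.add_le_add_right hB m).trans hm₀)
  exact ⟨_, isCoveringArray_of_forall_coversUpToShift (fun q => B q ∘ e) he⟩

theorem pow_mul_pow_le_of_logb_le {α t m n : ℕ} (hα : 2 ≤ α) (ht : 2 ≤ t) (hm : 0 < m)
    (h : ((t : ℝ) - 1) * logb 2 m + t * logb 2 (2 * α) ≤
      n * logb 2 ((α : ℝ) ^ (t - 1) / ((α : ℝ) ^ (t - 1) - 1))) :
    (2 * m) ^ t * α ^ t * (α ^ t - α) ^ n ≤ m * (α ^ t) ^ n := by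
  have ha : (2 : ℝ) ≤ α := by exact_mod_cast hα
  have hm' : (0 : ℝ) < m := by exact_mod_cast hm
  have hsub : ((α ^ t - α : ℕ) : ℝ) = (α : ℝ) ^ t - α := by
    rw [Nat.cast_sub (Nat.le_self_pow (by omega : t ≠ 0) α), Nat.cast_pow]
  set a : ℝ := (α : ℝ)
  set b := a ^ (t - 1)
  have hb : 1 < b := one_lt_pow₀ (by linarith) (by omega)
  have hat : a ^ t = a * b := by rw [← pow_succ', Nat.sub_add_cancel (by omega : 1 ≤ t)]
  have hgap : 0 ≤ a ^ t - a := by rw [hat]; nlinarith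
  have hlog : (2 * m * a) ^ t ≤ m * (b / (b - 1)) ^ n := by
    have hr : 0 < b / (b - 1) := div_pos (by linarith) (by linarith)
    rw [← logb_le_logb (b := 2) (by norm_num) (by positivity) (by positivity), logb_pow,
      logb_mul hm'.ne' (by positivity), logb_pow, mul_right_comm,
      logb_mul (by positivity) (by positivity)]
    linarith
  have hcancel : b / (b - 1) * (a ^ t - a) = a ^ t := by
    rw [hat]; field_simp [(by linarith : b - 1 ≠ 0)]
  rw [← Nat.cast_le (α := ℝ)]
  push_cast [hsub]
  calc (2 * (m : ℝ)) ^ t * a ^ t * (a ^ t - a) ^ n = (2 * m * a) ^ t * (a ^ t - a) ^ n := by ring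
    _ ≤ m * (b / (b - 1)) ^ n * (a ^ t - a) ^ n := by gcongr
    _ = m * (a ^ t) ^ n := by rw [mul_assoc, ← mul_pow, hcancel]

theorem one_lt_pow_div_pow_sub_one {α t : ℕ} (hα : 2 ≤ α) (ht : 2 ≤ t) :
    1 < (α : ℝ) ^ (t - 1) / ((α : ℝ) ^ (t - 1) - 1) := by
  have hb : 1 < (α : ℝ) ^ (t - 1) := one_lt_pow₀ (by exact_mod_cast hα) (by omega)
  rw [one_lt_div (by linarith)]
  linarith

theorem exists_isCoveringArray_card_le {α t m : ℕ} (hα : 2 ≤ α) (ht : 2 ≤ t) (hm : t ≤ m) :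
    ∃ (n : ℕ) (M : Fin m → Fin n → Fin α), IsCoveringArray m n α t M ∧
      (n : ℝ) ≤ α * (((t : ℝ) - 1) * logb 2 m + t * logb 2 (2 * α)) /
        logb 2 ((α : ℝ) ^ (t - 1) / ((α : ℝ) ^ (t - 1) - 1)) + α := by
  have : NeZero α := ⟨by omega⟩
  have ha : (2 : ℝ) ≤ α := by exact_mod_cast hα
  set L := logb 2 ((α : ℝ) ^ (t - 1) / ((α : ℝ) ^ (t - 1) - 1))
  have hL : 0 < L := logb_pos one_lt_two (one_lt_pow_div_pow_sub_one hα ht)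
  set x := (((t : ℝ) - 1) * logb 2 m + t * logb 2 (2 * α)) / L
  have hx : 0 ≤ x := by
    refine div_nonneg (add_nonneg (mul_nonneg ?_ ?_) ?_) hL.le
    · have : (2 : ℝ) ≤ t := by exact_mod_cast ht
      linarith
    · exact logb_nonneg one_lt_two (by exact_mod_cast (by omega : 1 ≤ m))
    · exact mul_nonneg (Nat.cast_nonneg t) (logb_nonneg one_lt_two (by linarith))
  have hxL : ((t : ℝ) - 1) * logb 2 m + t * logb 2 (2 * α) ≤ ⌈x⌉₊ * L := by
    calc _ = x * L := (div_mul_cancel₀ _ hL.ne').symm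
      _ ≤ ⌈x⌉₊ * L := by gcongr; exact Nat.le_ceil x
  obtain ⟨M, hM⟩ := exists_isCoveringArray_of_pow_le (m := m) (m₀ := 2 * m) (k := m) (n := ⌈x⌉₊)
    (by omega : 0 < t) (by omega) (by omega) (pow_mul_pow_le_of_logb_le hα ht (by omega) hxL)
  refine ⟨_, M, hM, ?_⟩
  calc ((⌈x⌉₊ * α : ℕ) : ℝ) = ⌈x⌉₊ * α := by push_cast; ring
    _ ≤ (x + 1) * α := by gcongr; exact (Nat.ceil_lt_add_one hx).le
    _ = _ := by ring

theorem stmt_9 (α t : ℕ) (hα : 2 ≤ α) (ht : 2 ≤ t) :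
    ∃ C : ℝ, C = (α : ℝ) * ((t : ℝ) - 1) /
        Real.logb 2 ((α : ℝ) ^ (t - 1) / ((α : ℝ) ^ (t - 1) - 1)) ∧
      ∃ f : ℕ → ℝ, Tendsto f atTop (nhds 0) ∧
        ∀ᶠ m in atTop, ∃ (n : ℕ) (M : Fin m → Fin n → Fin α),
          IsCoveringArray m n α t M ∧ (n : ℝ) ≤ C * Real.logb 2 m * (1 + f m) := by
  refine ⟨_, rfl, ?_⟩
  set L := logb 2 ((α : ℝ) ^ (t - 1) / ((α : ℝ) ^ (t - 1) - 1))
  have hL : 0 < L := logb_pos one_lt_two (one_lt_pow_div_pow_sub_one hα ht)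
  set C := (α : ℝ) * ((t : ℝ) - 1) / L
  have hC : 0 < C :=
    div_pos (mul_pos (by positivity) (sub_pos.mpr (by exact_mod_cast (by omega : 1 < t)))) hL
  set D := (α : ℝ) * (t * logb 2 (2 * α)) / L + α
  refine ⟨fun m => D / (C * logb 2 m), ?_, ?_⟩
  · exact tendsto_const_nhds.div_atTop <| Tendsto.const_mul_atTop hC <|
      (tendsto_logb_atTop one_lt_two).comp tendsto_natCast_atTop_atTop
  · filter_upwards [eventually_ge_atTop t] with m hm
    obtain ⟨n, M, hM, hn⟩ := exists_isCoveringArray_card_le hα ht hm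
    have hClog : 0 < C * logb 2 m :=
      mul_pos hC (logb_pos one_lt_two (by exact_mod_cast (by omega : 1 < m)))
    refine ⟨n, M, hM, ?_⟩
    rw [mul_add, mul_one, mul_div_cancel₀ _ hClog.ne']
    calc (n : ℝ) ≤ _ := hn
      _ = C * logb 2 m + D := by ring
end

section
/- For integers α ≥ 2 and t ≥ 2, let γ₂ = [C(2α,1)·C(2α-1,1)^t - C(2α,2)·C(2α-2,0)^t]/C(2α,2)^t and γ₁ = α^{-(t-1)}. Then γ₂ = (2α(2α-1)^t - C(2α,2)) / C(2α,2)^t, and (1-γ₂)^(1/(2α)) ≤ (1-γ₁)^(1/α). -/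
theorem stmt_13 (α t : ℕ) (hα : 2 ≤ α) (ht : 2 ≤ t) :
    (∑ i ∈ Finset.Icc 1 2, (-1 : ℝ) ^ (i + 1) * (Nat.choose (α * 2) i) *
          ((Nat.choose (α * 2 - i) (2 - i) : ℝ)) ^ t) / ((Nat.choose (α * 2) 2 : ℝ)) ^ t
      = (2 * (α : ℝ) * (2 * (α : ℝ) - 1) ^ t - (Nat.choose (2 * α) 2 : ℝ)) /
        ((Nat.choose (2 * α) 2 : ℝ)) ^ t ∧
    (1 - (∑ i ∈ Finset.Icc 1 2, (-1 : ℝ) ^ (i + 1) * (Nat.choose (α * 2) i) *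
          ((Nat.choose (α * 2 - i) (2 - i) : ℝ)) ^ t) / ((Nat.choose (α * 2) 2 : ℝ)) ^ t)
        ^ ((1 : ℝ) / (2 * α))
      ≤ (1 - (1 / (α : ℝ)) ^ (t - 1)) ^ ((1 : ℝ) / α) := by
  have ha2 : (2:ℝ) ≤ (α:ℝ) := by exact_mod_cast hα
  have ha0 : (0:ℝ) < (α:ℝ) := by linarith
  set a : ℝ := (α:ℝ) with ha
  have hCn : (2*α).choose 2 = α * (2*α - 1) := by
    rw [Nat.choose_two_right, show 2*α*(2*α-1) = 2*(α*(2*α-1)) by ring,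
      Nat.mul_div_cancel_left _ (by norm_num)]
  have hC : ((2*α).choose 2 : ℝ) = a * (2*a - 1) := by
    rw [hCn, Nat.cast_mul, Nat.cast_sub (by omega : 1 ≤ 2*α)]
    push_cast; ring
  have hIcc : Finset.Icc 1 2 = ({1, 2} : Finset ℕ) := by decide
  have hsum : (∑ i ∈ Finset.Icc 1 2, (-1 : ℝ) ^ (i + 1) * (Nat.choose (α * 2) i) *
          ((Nat.choose (α * 2 - i) (2 - i) : ℝ)) ^ t)
      = 2 * a * (2*a-1) ^ t - ((2*α).choose 2 : ℝ) := by
    rw [hIcc, Finset.sum_pair (by norm_num)]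
    have h1 : (α*2).choose 1 = α*2 := Nat.choose_one_right _
    have h2 : (α*2-1).choose (2-1) = α*2-1 := Nat.choose_one_right _
    have h3 : (α*2-2).choose (2-2) = 1 := Nat.choose_zero_right _
    have h4 : ((α*2-1 : ℕ) : ℝ) = 2*a-1 := by
      rw [Nat.cast_sub (by omega : 1 ≤ α*2)]; push_cast; ring
    rw [h1, h2, h3, h4, show α*2 = 2*α from mul_comm _ _]
    push_cast
    ring
  refine ⟨by rw [hsum, show α*2 = 2*α from mul_comm _ _], ?_⟩
  rw [hsum, show α*2 = 2*α from mul_comm _ _]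
  -- abbreviations
  obtain ⟨s, rfl⟩ : ∃ s, t = s + 1 := ⟨t-1, by omega⟩
  have hs1 : 1 ≤ s := by omega
  rw [Nat.add_sub_cancel]
  set b : ℝ := 2*a - 1 with hb
  have hb0 : (0:ℝ) < b := by simp only [hb]; linarith
  have hab : a ≤ b := by simp only [hb]; linarith
  set p : ℝ := a ^ s with hp
  set q : ℝ := b ^ s with hq
  have hp0 : 0 < p := by positivity
  have hq0 : 0 < q := by positivity
  have hpq : p ≤ q := pow_le_pow_left₀ ha0.le hab s
  have hp2 : (2:ℝ) ≤ p := by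
    calc (2:ℝ) ≤ a := ha2
    _ = a^1 := (pow_one a).symm
    _ ≤ a^s := pow_le_pow_right₀ (by linarith) hs1
  have hCt : ((2*α).choose 2 : ℝ) ^ (s+1) = a * b * (p * q) := by
    rw [hC, pow_succ, mul_pow, hp, hq]; ring
  have hbt : b ^ (s+1) = b * q := by rw [pow_succ, hq]; ring
  have hCden : (0:ℝ) < a * b * (p * q) := by positivity
  set γ₁ : ℝ := (1/a)^s with hγ₁
  have hγ₁v : γ₁ = 1/p := by rw [hγ₁, hp, div_pow, one_pow]
  have hγ₁0 : 0 ≤ 1 - γ₁ := by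
    rw [hγ₁v]; have : 1/p ≤ 1 := by rw [div_le_one hp0]; linarith
    linarith
  have hnn : 0 ≤ 1 - (2 * a * b ^ (s+1) - ((2*α).choose 2 : ℝ)) / ((2*α).choose 2 : ℝ) ^ (s+1) := by
    rw [hCt, hbt, hC, sub_nonneg, div_le_one hCden]
    nlinarith [mul_pos (mul_pos ha0 hb0) hq0]
  have key : 1 - (2 * a * b ^ (s+1) - ((2*α).choose 2 : ℝ)) / ((2*α).choose 2 : ℝ) ^ (s+1)
      ≤ (1 - γ₁)^2 := by
    rw [hCt, hbt, hC, hγ₁v, one_sub_div hCden.ne',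
      show 1 - 1/p = (p-1)/p by field_simp, div_pow, div_le_div_iff₀ hCden (by positivity)]
    nlinarith [mul_nonneg (mul_nonneg (mul_nonneg ha0.le hb0.le) hp0.le) (sub_nonneg.2 hpq)]
  calc (1 - (2 * a * b ^ (s+1) - ((2*α).choose 2 : ℝ)) / ((2*α).choose 2 : ℝ) ^ (s+1))
        ^ ((1:ℝ)/(2*a))
      ≤ ((1 - γ₁)^2) ^ ((1:ℝ)/(2*a)) := Real.rpow_le_rpow hnn key (by positivity)
    _ = (1 - γ₁) ^ ((1:ℝ)/a) := by
        rw [← Real.rpow_natCast (1-γ₁) 2, ← Real.rpow_mul hγ₁0]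
        congr 1
        push_cast
        field_simp
end

section
/- For any probability space with events C_1,...,C_K, each of probability at most p, each mutually independent of all but at most d of the others, if e·p·(d+1) ≤ 1 then P(⋂_{k=1}^K C_k^c) > 0. -/
/-!
Set `x = 1/(d+2)` (not the usual `1/(d+1)`, so that `x < 1` also for `d = 0`); the condition
`e p (d+1) ≤ 1` gives `p ≤ x (1-x)^d`. By strong induction on `S`, `P(C_i ∩ A_S) ≤ x P(A_S)`
whenever `i ∉ S`, where `A_S = ⋂_{j ∈ S} C_jᶜ`. For the inductive step split `S` into the part
`S₁` inside the independence set of `C_i` and the at most `d` indices `S₂` outside it: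
independence gives `P(C_i ∩ A_{S₁}) ≤ p P(A_{S₁})`, while adding the indices of `S₂` one at a time
costs a factor of at most `1 - x` each time by the induction hypothesis, so
`P(A_S) ≥ (1-x)^d P(A_{S₁})`. The same peeling, started from `A_∅ = Ω`, gives
`P(A_S) ≥ (1-x)^|S| > 0`.
-/

open MeasureTheory ProbabilityTheory Finset

lemma inv_exp_mul_le_inv_mul_one_sub_inv_pow (d : ℕ) :
    (Real.exp 1 * (d + 1))⁻¹ ≤ ((d : ℝ) + 2)⁻¹ * (1 - ((d : ℝ) + 2)⁻¹) ^ d := by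
  set y : ℝ := 1 + ((d + 1 : ℕ) : ℝ)⁻¹
  have hy : 1 - ((d : ℝ) + 2)⁻¹ = y⁻¹ := by
    simp only [y]
    push_cast
    field_simp
    ring
  have hx : ((d : ℝ) + 2)⁻¹ = y⁻¹ * ((d : ℝ) + 1)⁻¹ := by
    simp only [y]
    push_cast
    field_simp
    ring
  calc (Real.exp 1 * (d + 1))⁻¹ = (Real.exp 1)⁻¹ * ((d : ℝ) + 1)⁻¹ := mul_inv _ _
    _ ≤ (y ^ (d + 1))⁻¹ * ((d : ℝ) + 1)⁻¹ := by
        gcongr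
        exact Real.one_add_inv_pow_le_exp
    _ = ((d : ℝ) + 2)⁻¹ * (1 - ((d : ℝ) + 2)⁻¹) ^ d := by
        rw [hy, hx, ← inv_pow, pow_succ']
        ring

section Avoidance

variable {Ω ι : Type*} {C : ι → Set Ω}

def avoidance (C : ι → Set Ω) (S : Finset ι) : Set Ω := ⋂ j ∈ S, (C j)ᶜ

@[simp]
lemma avoidance_empty : avoidance C ∅ = Set.univ := by
  simp [avoidance]

lemma avoidance_insert [DecidableEq ι] (a : ι) (S : Finset ι) :
    avoidance C (insert a S) = (C a)ᶜ ∩ avoidance C S :=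
  Finset.set_biInter_insert a S _

lemma avoidance_anti {S T : Finset ι} (h : S ⊆ T) : avoidance C T ⊆ avoidance C S :=
  Set.biInter_subset_biInter_left h

lemma measurableSet_avoidance {m : MeasurableSpace Ω} {S : Finset ι}
    (hC : ∀ j ∈ S, MeasurableSet[m] (C j)) : MeasurableSet[m] (avoidance C S) :=
  S.measurableSet_biInter fun j hj => (hC j hj).compl

variable [MeasurableSpace Ω] {μ : Measure Ω}

lemma measureReal_compl_inter [IsFiniteMeasure μ] {A : Set Ω} (hA : MeasurableSet A)
    (T : Set Ω) :
    μ.real (Aᶜ ∩ T) = μ.real T - μ.real (A ∩ T) := by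
  rw [Set.inter_comm A, ← measureReal_inter_add_sdiff (s := T) hA, Set.sdiff_eq,
    Set.inter_comm T Aᶜ]
  ring

lemma measureReal_inter_avoidance_eq_mul {i : ι} {J S : Finset ι}
    (hind : Indep (MeasurableSpace.generateFrom {C i})
      (MeasurableSpace.generateFrom {s | ∃ j ∈ J, s = C j}) μ) (hS : S ⊆ J) :
    μ.real (C i ∩ avoidance C S) = μ.real (C i) * μ.real (avoidance C S) := by
  have hCi : MeasurableSet[MeasurableSpace.generateFrom {C i}] (C i) :=
    MeasurableSpace.measurableSet_generateFrom rfl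
  have hA :
      MeasurableSet[MeasurableSpace.generateFrom {s | ∃ j ∈ J, s = C j}] (avoidance C S) :=
    measurableSet_avoidance fun j hj =>
      MeasurableSpace.measurableSet_generateFrom ⟨j, hS hj, rfl⟩
  simp only [Measure.real, (hind.indepSet_of_measurableSet hCi hA).measure_inter_eq_mul,
    ENNReal.toReal_mul]

lemma one_sub_pow_mul_measureReal_avoidance_le [IsFiniteMeasure μ] [DecidableEq ι] {x : ℝ}
    (hx : x ≤ 1) (hC : ∀ j, MeasurableSet (C j)) {V U : Finset ι} (hVU : Disjoint V U)
    (h : ∀ a ∈ U, ∀ W ⊆ V ∪ U, a ∉ W →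
      μ.real (C a ∩ avoidance C W) ≤ x * μ.real (avoidance C W)) :
    (1 - x) ^ U.card * μ.real (avoidance C V) ≤ μ.real (avoidance C (V ∪ U)) := by
  induction U using Finset.induction_on with
  | empty => simp
  | @insert a U haU ih =>
    have haVU : a ∉ V ∪ U := by
      simp only [mem_union, not_or]
      exact ⟨disjoint_right.mp hVU (mem_insert_self a U), haU⟩
    have hVU' : V ∪ U ⊆ V ∪ insert a U := union_subset_union_right (subset_insert a U)
    have hprev := ih (disjoint_of_subset_right (subset_insert a U) hVU)
      fun b hb W hW => h b (mem_insert_of_mem hb) W (hW.trans hVU')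
    have hstep := h a (mem_insert_self a U) (V ∪ U) hVU' haVU
    rw [union_insert, avoidance_insert, measureReal_compl_inter (hC a), card_insert_of_notMem haU,
      pow_succ']
    nlinarith [mul_le_mul_of_nonneg_left hprev (sub_nonneg.mpr hx)]

lemma one_sub_pow_card_le_measureReal_avoidance [IsProbabilityMeasure μ] {x : ℝ} (hx : x ≤ 1)
    (hC : ∀ j, MeasurableSet (C j))
    (h : ∀ (S : Finset ι) (i : ι), i ∉ S →
      μ.real (C i ∩ avoidance C S) ≤ x * μ.real (avoidance C S)) (S : Finset ι) :
    (1 - x) ^ S.card ≤ μ.real (avoidance C S) := by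
  classical
  simpa using one_sub_pow_mul_measureReal_avoidance_le (μ := μ) hx hC (disjoint_empty_left S)
    fun a _ W _ haW => h W a haW

lemma measureReal_inter_avoidance_le [IsFiniteMeasure μ] [Fintype ι] [DecidableEq ι]
    {p x : ℝ} {d : ℕ} (hx0 : 0 ≤ x) (hx1 : x ≤ 1) (hpx : p ≤ x * (1 - x) ^ d)
    (hC : ∀ j, MeasurableSet (C j)) (hp : ∀ i, μ.real (C i) ≤ p) (J : ι → Finset ι)
    (hJ : ∀ i, (univ \ insert i (J i)).card ≤ d)
    (hind : ∀ i, Indep (MeasurableSpace.generateFrom {C i})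
      (MeasurableSpace.generateFrom {s | ∃ j ∈ J i, s = C j}) μ)
    (S : Finset ι) (i : ι) (hi : i ∉ S) :
    μ.real (C i ∩ avoidance C S) ≤ x * μ.real (avoidance C S) := by
  induction S using Finset.strongInduction generalizing i with
  | H S ih =>
    have hS₂ : (S \ J i).card ≤ d := by
      refine (card_le_card fun j hj => ?_).trans (hJ i)
      simp only [mem_sdiff, mem_univ, mem_insert, true_and] at hj ⊢
      rintro (rfl | hjJ)
      exacts [hi hj.1, hj.2 hjJ]
    have hsplit : S ∩ J i ∪ S \ J i = S := by rw [union_comm, sdiff_union_inter]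
    have hpeel : (1 - x) ^ (S \ J i).card * μ.real (avoidance C (S ∩ J i))
        ≤ μ.real (avoidance C S) := by
      have := one_sub_pow_mul_measureReal_avoidance_le (μ := μ) hx1 hC
        (disjoint_sdiff_inter S (J i)).symm fun a ha W hW haW =>
          ih W (ssubset_of_subset_of_ne (hsplit ▸ hW)
            (by rintro rfl; exact haW (mem_sdiff.mp ha).1)) a haW
      rwa [hsplit] at this
    have hpow : (1 - x) ^ d ≤ (1 - x) ^ (S \ J i).card :=
      pow_le_pow_of_le_one (by linarith) (by linarith) hS₂
    calc μ.real (C i ∩ avoidance C S)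
        ≤ μ.real (C i ∩ avoidance C (S ∩ J i)) :=
          measureReal_mono (Set.inter_subset_inter_right _ (avoidance_anti inter_subset_left))
      _ = μ.real (C i) * μ.real (avoidance C (S ∩ J i)) :=
          measureReal_inter_avoidance_eq_mul (hind i) inter_subset_right
      _ ≤ x * (1 - x) ^ (S \ J i).card * μ.real (avoidance C (S ∩ J i)) := by
          gcongr
          exact (hp i).trans (hpx.trans (mul_le_mul_of_nonneg_left hpow hx0))
      _ ≤ x * μ.real (avoidance C S) := by
          rw [mul_assoc]
          gcongr

end Avoidance

/-- The symmetric Lovász Local Lemma. -/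
theorem stmt_15 {Ω : Type*} [MeasurableSpace Ω] (μ : Measure Ω) [IsProbabilityMeasure μ]
    (K : ℕ) (C : Fin K → Set Ω) (hmeas : ∀ k, MeasurableSet (C k))
    (p : ℝ) (d : ℕ)
    (hp : ∀ k, (μ (C k)).toReal ≤ p)
    (hindep : ∀ i : Fin K, ∃ J : Finset (Fin K), i ∉ J ∧
      (Finset.univ \ insert i J).card ≤ d ∧
      Indep (MeasurableSpace.generateFrom {C i})
        (MeasurableSpace.generateFrom {s | ∃ j ∈ J, s = C j}) μ)
    (hcond : Real.exp 1 * p * (d + 1) ≤ 1) :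
    0 < μ (⋂ k, (C k)ᶜ) := by
  set x : ℝ := ((d : ℝ) + 2)⁻¹
  have hx0 : 0 ≤ x := by positivity
  have hx1 : x < 1 := inv_lt_one_of_one_lt₀ (by linarith [d.cast_nonneg (α := ℝ)])
  have hpx : p ≤ x * (1 - x) ^ d := by
    refine le_trans ?_ (inv_exp_mul_le_inv_mul_one_sub_inv_pow d)
    rw [← one_div, le_div_iff₀ (by positivity)]
    linarith
  choose J _ hJ hind using hindep
  have hpos := one_sub_pow_card_le_measureReal_avoidance hx1.le hmeas
    (measureReal_inter_avoidance_le hx0 hx1.le hpx hmeas hp J hJ hind) univ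
  have hA : ⋂ k, (C k)ᶜ = avoidance C univ := by simp [avoidance]
  rw [hA]
  exact (ENNReal.toReal_pos_iff.mp ((pow_pos (by linarith) _).trans_le hpos)).1
end
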